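/- arXiv:1112.3128 — 10 statements merged into one kernel-verified Lean document; each statement's English description precedes it below -/
import Mathlib

section
/- Let I be an infinite set. The function φ₁ᵖ : (I → ℂ) → ℂ defined by φ₁ᵖ(β) = ∏_{i∈I} β_i (a finite product, since all but finitely many factors are 1) when β_i = 1 for all but finitely many i ∈ I, and φ₁ᵖ(β) = 0 otherwise, is multilinear: for every i₀ ∈ I, every β : I → ℂ, every c ∈ ℂ and all v, w ∈ ℂ one has φ₁ᵖ(Function.update β i₀ (c·v + w)) = c·φ₁ᵖ(Function.update β i₀ v) + φ₁ᵖ(Function.update β i₀ w). Equivalently, there exists a MultilinearMap ℂ (fun _ : I => ℂ) ℂ whose underlying function is φ₁ᵖ. -/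
open scoped TensorProduct Classical

/-- The multilinear functional `φ₁ᵖ` on `Π i : I, ℂ`: the (finite) product of the
coordinates when all but finitely many of them equal `1`, and `0` otherwise. -/
noncomputable def phiOneP (I : Type*) (β : I → ℂ) : ℂ :=
  if {i | β i ≠ 1}.Finite then ∏ᶠ i, β i else 0

/-!
Changing one coordinate does not affect whether the coordinates are eventually `1`, and
when they are, the finite product is linear in each factor. Hence
`φ₁ᵖ (update β i₀ x) = x * φ₁ᵖ (update β i₀ 1)`, which is linear in `x`.
-/

open Function

theorem hasFiniteMulSupport_update_iff {ι M : Type*} [DecidableEq ι] [One M]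
    (f : ι → M) (a : ι) (b : M) :
    HasFiniteMulSupport (update f a b) ↔ HasFiniteMulSupport f := by
  rcases eq_or_ne b 1 with rfl | hb
  · rw [HasFiniteMulSupport, mulSupport_update_one, ← Set.finite_insert (a := a),
      Set.insert_sdiff_singleton, Set.finite_insert]
    rfl
  · rw [HasFiniteMulSupport, mulSupport_update_of_ne_one _ _ hb, Set.finite_insert]
    rfl

theorem finprod_update {ι M : Type*} [DecidableEq ι] [CommMonoid M] {f : ι → M}
    (hf : HasFiniteMulSupport f) (a : ι) (b : M) :
    ∏ᶠ i, update f a b i = b * ∏ᶠ (i) (_ : i ≠ a), f i := by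
  rw [← mul_finprod_cond_ne a ((hasFiniteMulSupport_update_iff f a b).2 hf), update_self]
  exact congrArg _ (finprod_congr fun i => finprod_congr fun hi => update_of_ne hi b f)

theorem phiOneP_update (I : Type*) [DecidableEq I] (i₀ : I) (β : I → ℂ) (x : ℂ) :
    phiOneP I (update β i₀ x) = x * phiOneP I (update β i₀ 1) := by
  change ite (HasFiniteMulSupport _) _ _ = x * ite (HasFiniteMulSupport _) _ _
  simp only [hasFiniteMulSupport_update_iff]
  split_ifs with hβ
  · rw [finprod_update hβ, finprod_update hβ, one_mul]
  · rw [mul_zero]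

noncomputable def phiOnePMultilinearMap (I : Type*) :
    MultilinearMap ℂ (fun _ : I => ℂ) ℂ where
  toFun := phiOneP I
  map_update_add' β i x y := by
    rw [phiOneP_update, phiOneP_update I i β x, phiOneP_update I i β y, add_mul]
  map_update_smul' β i c x := by
    rw [phiOneP_update, phiOneP_update I i β x, smul_eq_mul, smul_eq_mul, mul_assoc]

theorem phiOneP_multilinear_general (I : Type*) [DecidableEq I] :
    (∀ (i₀ : I) (β : I → ℂ) (c v w : ℂ),
      phiOneP I (Function.update β i₀ (c * v + w)) =
        c * phiOneP I (Function.update β i₀ v) + phiOneP I (Function.update β i₀ w)) ∧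
    ∃ M : MultilinearMap ℂ (fun _ : I => ℂ) ℂ, ⇑M = phiOneP I := by
  refine ⟨fun i₀ β c v w => ?_, phiOnePMultilinearMap I, rfl⟩
  have h := (phiOnePMultilinearMap I).map_update_add β i₀ (c • v) w
  rwa [MultilinearMap.map_update_smul, smul_eq_mul] at h

theorem phiOneP_multilinear (I : Type*) [Infinite I] [DecidableEq I] :
    (∀ (i₀ : I) (β : I → ℂ) (c v w : ℂ),
      phiOneP I (Function.update β i₀ (c * v + w)) =
        c * phiOneP I (Function.update β i₀ v) + phiOneP I (Function.update β i₀ w)) ∧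
    ∃ M : MultilinearMap ℂ (fun _ : I => ℂ) ℂ, ⇑M = phiOneP I :=
  phiOneP_multilinear_general I
end

section
/- Let (X_i)_{i∈I} be a family of complex vector spaces and let u ∈ Π_{i∈I} X_i satisfy u_i ≠ 0 for every i ∈ I. Then the elementary tensor ⊗u is nonzero in ⨂_{i∈I} X_i. -/
/-!
Choosing functionals `f i` with `f i (u i) = 1`, it suffices to exhibit a multilinear form on
`I → ℂ` that does not vanish at the constant family `1`. The product `∏ᶠ j, x j`, kept when
`x j = 1` for all but finitely many `j` and replaced by `0` otherwise, is such a form: changing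
one coordinate does not affect that finiteness condition, so the form is linear in each
coordinate.
-/

open Function

section FinprodOrZero

variable {I : Type*}

theorem mulSupport_update_subset_insert {M : Type*} [One M] [DecidableEq I] (x : I → M)
    (i : I) (a : M) : mulSupport (update x i a) ⊆ insert i (mulSupport x) := by
  intro j hj
  by_cases hji : j = i <;> simp_all

theorem finite_mulSupport_update_iff {M : Type*} [One M] [DecidableEq I] (x : I → M) (i : I)
    (a : M) : (mulSupport (update x i a)).Finite ↔ (mulSupport x).Finite := by
  refine ⟨fun h => ?_, fun h => (h.insert i).subset (mulSupport_update_subset_insert x i a)⟩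
  have hsub := mulSupport_update_subset_insert (update x i a) i (x i)
  rw [update_idem, update_eq_self] at hsub
  exact (h.insert i).subset hsub

variable {R : Type*}

noncomputable def finprodOrZero [CommMonoidWithZero R] (x : I → R) : R :=
  open scoped Classical in if (mulSupport x).Finite then ∏ᶠ j, x j else 0

theorem finprodOrZero_one [CommMonoidWithZero R] :
    finprodOrZero (fun _ : I => (1 : R)) = 1 := by
  simp [finprodOrZero]

theorem finprodOrZero_update [CommMonoidWithZero R] [DecidableEq I] (x : I → R) (i : I)
    (a : R) : finprodOrZero (update x i a) = a * finprodOrZero (update x i 1) := by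
  by_cases hx : (mulSupport x).Finite
  · have hupdate (b : R) :
        finprodOrZero (update x i b) = b * ∏ j ∈ insert i hx.toFinset \ {i}, x j := by
      have hsub : mulSupport (update x i b) ⊆ ↑(insert i hx.toFinset) := by
        simpa using mulSupport_update_subset_insert x i b
      rw [finprodOrZero, if_pos ((finite_mulSupport_update_iff x i b).mpr hx),
        finprod_eq_prod_of_mulSupport_subset _ hsub,
        Finset.prod_update_of_mem (Finset.mem_insert_self _ _)]
    rw [hupdate, hupdate, one_mul]
  · simp [finprodOrZero, finite_mulSupport_update_iff, hx]

noncomputable def finprodOrZeroMultilinear (R I : Type*) [CommSemiring R] :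
    MultilinearMap R (fun _ : I => R) R where
  toFun := finprodOrZero
  map_update_add' x i a b := by
    rw [finprodOrZero_update x i (a + b), finprodOrZero_update x i a,
      finprodOrZero_update x i b, add_mul]
  map_update_smul' x i c a := by
    rw [finprodOrZero_update x i (c • a), finprodOrZero_update x i a, smul_eq_mul, smul_eq_mul,
      mul_assoc]

end FinprodOrZero

theorem PiTensorProduct.tprod_ne_zero_of_forall_apply_eq_one {I R : Type*} [CommSemiring R]
    [Nontrivial R] {X : I → Type*} [∀ i, AddCommMonoid (X i)] [∀ i, Module R (X i)]
    {u : ∀ i, X i} (f : ∀ i, X i →ₗ[R] R) (hf : ∀ i, f i (u i) = 1) : tprod R u ≠ 0 := by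
  intro h
  have := congrArg (lift ((finprodOrZeroMultilinear R I).compLinearMap f)) h
  rw [lift.tprod, map_zero, MultilinearMap.compLinearMap_apply, funext hf] at this
  exact one_ne_zero (finprodOrZero_one.symm.trans this)

theorem tprod_ne_zero_of_forall_ne_zero_general {I : Type*}
    (X : I → Type*) [∀ i, AddCommGroup (X i)] [∀ i, Module ℂ (X i)]
    (u : ∀ i, X i) (hu : ∀ i, u i ≠ 0) :
    PiTensorProduct.tprod ℂ u ≠ 0 := by
  choose f hf using fun i => Module.Projective.exists_dual_eq_one ℂ (hu i)
  exact PiTensorProduct.tprod_ne_zero_of_forall_apply_eq_one f hf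

/-- If `u_i ≠ 0` for every `i`, then the elementary tensor `⊗u` is nonzero in the
algebraic tensor product `⨂_{i∈I} X_i` of a family of complex vector spaces. -/
theorem tprod_ne_zero_of_forall_ne_zero {I : Type*} [Infinite I]
    (X : I → Type*) [∀ i, AddCommGroup (X i)] [∀ i, Module ℂ (X i)]
    (u : ∀ i, X i) (hu : ∀ i, u i ≠ 0) :
    PiTensorProduct.tprod ℂ u ≠ 0 :=
  tprod_ne_zero_of_forall_ne_zero_general X u hu
end

section
/- Let (X_i)_{i∈I} be a family of nonzero complex vector spaces. For x ∈ Π_{i∈I} X_i with x_i ≠ 0 for all i, let S_x ⊆ ⨂_{i∈I} X_i denote the ℂ-linear span of {⊗y : y ∈ Π_{i∈I} X_i, y_i ≠ 0 for all i, and y ∼ x}. Then: (i) S_x = S_y whenever x ∼ y, so that S descends to a family of submodules (S_ω) indexed by the quotient Ω_{I;X} of {x ∈ Π_{i∈I} X_i : ∀i, x_i ≠ 0} by ∼; (ii) this family is independent: for each class ω ∈ Ω_{I;X}, S_ω intersects the supremum of the S_{ω'} for ω' ≠ ω trivially (iSupIndep); and (iii) the supremum of all S_ω is the whole space ⨂_{i∈I}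 X_i. In other words, ⨂_{i∈I} X_i is the internal direct sum of the submodules S_ω over ω ∈ Ω_{I;X}. -/
/-! For each family `x`, the assignment `⊗y ↦ ⊗y` if `y ∼ x` and `⊗y ↦ 0` otherwise is
multilinear, because changing a single coordinate of `y` does not change whether `y ∼ x`.
The induced linear endomorphism of `⨂_{i∈I} X_i` is the identity on `S_x` and vanishes on
every `S_{x'}` with `x' ≁ x`, which gives independence. The spans exhaust the tensor product
because an elementary tensor with a zero entry vanishes. -/

open scoped TensorProduct

variable {I : Type*} (X : I → Type*) [∀ i, AddCommGroup (X i)] [∀ i, Module ℂ (X i)]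

/-- The equivalence relation `∼` ("equal at all but finitely many coordinates") on the
set of families of nowhere-zero vectors. -/
def nowhereZeroSetoid : Setoid {x : ∀ i, X i // ∀ i, x i ≠ 0} where
  r x y := {i | x.1 i ≠ y.1 i}.Finite
  iseqv := by
    refine ⟨fun x => by simp, fun {x y} h => h.subset fun i hi => ?_,
      fun {x y z} hxy hyz => (hxy.union hyz).subset fun i hi => ?_⟩
    · exact fun e => hi e.symm
    · by_cases h1 : x.1 i = y.1 i
      · exact Or.inr fun e => hi (h1.trans e)
      · exact Or.inl h1

/-- The linear span `S_x` of the elementary tensors `⊗y` over the nowhere-zero families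
`y` equivalent to `x`. -/
def simSpan (x : {x : ∀ i, X i // ∀ i, x i ≠ 0}) : Submodule ℂ (⨂[ℂ] i, X i) :=
  Submodule.span ℂ {t | ∃ y : {x : ∀ i, X i // ∀ i, x i ≠ 0},
    {i | y.1 i ≠ x.1 i}.Finite ∧ t = PiTensorProduct.tprod ℂ y.1}

open Filter

theorem Submodule.disjoint_of_le_eqLocus_of_le_ker {R M : Type*} [Semiring R]
    [AddCommMonoid M] [Module R M] {p q : Submodule R M} {f : M →ₗ[R] M}
    (hp : p ≤ LinearMap.eqLocus f LinearMap.id) (hq : q ≤ LinearMap.ker f) : Disjoint p q :=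
  Submodule.disjoint_def.2 fun _ hxp hxq => (hp hxp).symm.trans (hq hxq)

theorem Function.eventually_cofinite_update_eq_iff {α : Type*} {β : α → Type*}
    [DecidableEq α] {f g : ∀ a, β a} {a : α} {b : β a} :
    (∀ᶠ j in cofinite, Function.update f a b j = g j) ↔ ∀ᶠ j in cofinite, f j = g j := by
  have hupdate : ∀ᶠ j in cofinite, Function.update f a b j = f j :=
    (eventually_cofinite_ne a).mono fun j hj => Function.update_of_ne hj b f
  constructor <;> intro h <;> filter_upwards [hupdate, h] with j h₁ h₂
  · exact h₁.symm.trans h₂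
  · exact h₁.trans h₂

namespace PiTensorProduct

variable {ι R : Type*} [CommSemiring R] {M : ι → Type*} [∀ i, AddCommMonoid (M i)]
  [∀ i, Module R (M i)]

open scoped Classical in
noncomputable def germTprod (x : ∀ i, M i) : MultilinearMap R M (⨂[R] i, M i) where
  toFun y := if ∀ᶠ i in cofinite, y i = x i then tprod R y else 0
  map_update_add' y i u v := by
    simp only [Function.eventually_cofinite_update_eq_iff]
    split_ifs <;> simp
  map_update_smul' y i c u := by
    simp only [Function.eventually_cofinite_update_eq_iff]
    split_ifs <;> simp

noncomputable def germProj (x : ∀ i, M i) : (⨂[R] i, M i) →ₗ[R] ⨂[R] i, M i :=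
  lift (germTprod x)

open scoped Classical in
theorem germProj_tprod (x y : ∀ i, M i) :
    germProj x (tprod R y) = if ∀ᶠ i in cofinite, y i = x i then tprod R y else 0 :=
  lift.tprod y

end PiTensorProduct

open PiTensorProduct

variable {X}

theorem simSpan_eq_of_sim {x y : {x : ∀ i, X i // ∀ i, x i ≠ 0}}
    (h : nowhereZeroSetoid X x y) : simSpan X x = simSpan X y := by
  unfold simSpan
  congr 1
  ext t
  exact ⟨fun ⟨z, hz, ht⟩ => ⟨z, (nowhereZeroSetoid X).trans' hz h, ht⟩,
    fun ⟨z, hz, ht⟩ => ⟨z, (nowhereZeroSetoid X).trans' hz ((nowhereZeroSetoid X).symm' h), ht⟩⟩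

theorem simSpan_le_eqLocus_germProj (x : {x : ∀ i, X i // ∀ i, x i ≠ 0}) :
    simSpan X x ≤ LinearMap.eqLocus (germProj x.1) LinearMap.id := by
  refine Submodule.span_le.2 ?_
  rintro _ ⟨y, hy, rfl⟩
  exact (germProj_tprod x.1 y.1).trans (if_pos hy)

theorem simSpan_le_ker_germProj {x y : {x : ∀ i, X i // ∀ i, x i ≠ 0}}
    (h : ¬ nowhereZeroSetoid X y x) : simSpan X y ≤ LinearMap.ker (germProj x.1) := by
  refine Submodule.span_le.2 ?_
  rintro _ ⟨z, hz, rfl⟩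
  refine (germProj_tprod x.1 z.1).trans (if_neg fun hzx => h ?_)
  exact (nowhereZeroSetoid X).trans' ((nowhereZeroSetoid X).symm' hz) hzx

theorem iSup_simSpan_eq_top : ⨆ x, simSpan X x = ⊤ := by
  rw [eq_top_iff, ← PiTensorProduct.span_tprod_eq_top (R := ℂ) (s := X), Submodule.span_le]
  rintro _ ⟨y, rfl⟩
  by_cases hy : ∀ i, y i ≠ 0
  · exact Submodule.mem_iSup_of_mem ⟨y, hy⟩
      (Submodule.subset_span ⟨⟨y, hy⟩, (nowhereZeroSetoid X).refl' _, rfl⟩)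
  · obtain ⟨i, hi⟩ := not_forall_not.1 hy
    rw [SetLike.mem_coe, MultilinearMap.map_coord_zero _ i hi]
    exact Submodule.zero_mem _

theorem piTensorProduct_directSum_simSpan_general :
    (∀ x y : {x : ∀ i, X i // ∀ i, x i ≠ 0},
      {i | x.1 i ≠ y.1 i}.Finite → simSpan X x = simSpan X y) ∧
    ∃ T : Quotient (nowhereZeroSetoid X) → Submodule ℂ (⨂[ℂ] i, X i),
      (∀ x, T (Quotient.mk (nowhereZeroSetoid X) x) = simSpan X x) ∧
      iSupIndep T ∧ (⨆ ω, T ω) = ⊤ := by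
  have hwd : ∀ x y : {x : ∀ i, X i // ∀ i, x i ≠ 0},
      {i | x.1 i ≠ y.1 i}.Finite → simSpan X x = simSpan X y :=
    fun _ _ => simSpan_eq_of_sim
  refine ⟨hwd, Quotient.lift (simSpan X) hwd, fun _ => rfl, ?_, ?_⟩
  · refine Quotient.ind fun x => Submodule.disjoint_of_le_eqLocus_of_le_ker
      (simSpan_le_eqLocus_germProj x) (iSup₂_le fun ω hω => ?_)
    induction ω using Quotient.ind with
    | _ y => exact simSpan_le_ker_germProj fun hyx => hω (Quotient.sound hyx)
  · exact (Quotient.mk_surjective.iSup_comp (Quotient.lift (simSpan X) hwd)).symm.trans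
      iSup_simSpan_eq_top

/-- `⨂_{i∈I} X_i` is the internal direct sum, over the classes `ω ∈ Ω_{I;X}` of nowhere-zero
families modulo `∼`, of the spans `S_ω` of the elementary tensors with entries in `ω`. -/
theorem piTensorProduct_directSum_simSpan [Infinite I] [∀ i, Nontrivial (X i)] :
    (∀ x y : {x : ∀ i, X i // ∀ i, x i ≠ 0},
      {i | x.1 i ≠ y.1 i}.Finite → simSpan X x = simSpan X y) ∧
    ∃ T : Quotient (nowhereZeroSetoid X) → Submodule ℂ (⨂[ℂ] i, X i),
      (∀ x, T (Quotient.mk (nowhereZeroSetoid X) x) = simSpan X x) ∧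
      iSupIndep T ∧ (⨆ ω, T ω) = ⊤ :=
  piTensorProduct_directSum_simSpan_general
end

section
/- Let (X_i)_{i∈I} and (Y_i)_{i∈I} be families of complex vector spaces and let Φ_i : X_i → Y_i be injective ℂ-linear maps for every i ∈ I. Then the induced ℂ-linear map ⨂Φ : ⨂_{i∈I} X_i → ⨂_{i∈I} Y_i, determined on elementary tensors by (⨂Φ)(⊗x) = ⊗(Φ_i(x_i)) (Mathlib's PiTensorProduct.map), is injective. -/
namespace PiTensorProduct

theorem map_leftInverse {ι R : Type*} [CommSemiring R] {M N : ι → Type*}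
    [∀ i, AddCommMonoid (M i)] [∀ i, Module R (M i)]
    [∀ i, AddCommMonoid (N i)] [∀ i, Module R (N i)]
    {f : ∀ i, M i →ₗ[R] N i} {g : ∀ i, N i →ₗ[R] M i}
    (h : ∀ i, Function.LeftInverse (g i) (f i)) :
    Function.LeftInverse (map g) (map f) := by
  have hgf : (fun i ↦ g i ∘ₗ f i) = fun i ↦ LinearMap.id := funext fun i ↦ LinearMap.ext (h i)
  intro x
  rw [← LinearMap.comp_apply, ← map_comp, hgf, map_id, LinearMap.id_apply]

/-- Over a field every injective linear map has a linear left inverse. -/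
theorem map_injective_of_injective {ι K : Type*} [Field K] {M N : ι → Type*}
    [∀ i, AddCommGroup (M i)] [∀ i, Module K (M i)]
    [∀ i, AddCommGroup (N i)] [∀ i, Module K (N i)]
    {f : ∀ i, M i →ₗ[K] N i} (hf : ∀ i, Function.Injective (f i)) :
    Function.Injective (map f) := by
  choose g hg using fun i ↦ (f i).exists_leftInverse_of_injective (LinearMap.ker_eq_bot.2 (hf i))
  exact (map_leftInverse fun i ↦ LinearMap.congr_fun (hg i)).injective

end PiTensorProduct

theorem piTensorProduct_map_injective_general {I : Type*}
    (X : I → Type*) (Y : I → Type*)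
    [∀ i, AddCommGroup (X i)] [∀ i, Module ℂ (X i)]
    [∀ i, AddCommGroup (Y i)] [∀ i, Module ℂ (Y i)]
    (Φ : ∀ i, X i →ₗ[ℂ] Y i) (hΦ : ∀ i, Function.Injective (Φ i)) :
    Function.Injective (PiTensorProduct.map Φ) :=
  PiTensorProduct.map_injective_of_injective hΦ

/-- If `Φ_i : X_i → Y_i` are injective linear maps between complex vector spaces, then the
induced map `⨂Φ : ⨂_{i∈I} X_i → ⨂_{i∈I} Y_i` is injective. -/
theorem piTensorProduct_map_injective {I : Type*} [Infinite I]
    (X : I → Type*) (Y : I → Type*)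
    [∀ i, AddCommGroup (X i)] [∀ i, Module ℂ (X i)]
    [∀ i, AddCommGroup (Y i)] [∀ i, Module ℂ (Y i)]
    (Φ : ∀ i, X i →ₗ[ℂ] Y i) (hΦ : ∀ i, Function.Injective (Φ i)) :
    Function.Injective (PiTensorProduct.map Φ) :=
  piTensorProduct_map_injective_general X Y Φ hΦ
end

section
/- Let β : I → ℂ satisfy β_i ≠ 0 for every i ∈ I. Then for every α : I → ℂ with α_i ≠ 0 for every i and α ∼ β, one has ⊗α = (∏_{i∈I} α_i·β_i⁻¹) • (⊗β) in ⨂_{i∈I} ℂ, where the product is the finite product over the finitely many indices i with α_i ≠ β_i (e.g. as finprod). Consequently, the ℂ-linear span of {⊗α : α : I → ℂ, α_i ≠ 0 for all i, α ∼ β} equals the one-dimensional subspace ℂ • (⊗β). -/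
open scoped TensorProduct

theorem MultilinearMap.map_eq_finprod_smul_of_finite_ne {K ι M : Type*} [Field K]
    [AddCommMonoid M] [Module K M] (f : MultilinearMap K (fun _ : ι => K) M) {α β : ι → K}
    (hβ : ∀ i, β i ≠ 0) (hfin : {i | α i ≠ β i}.Finite) :
    f α = (∏ᶠ i, α i * (β i)⁻¹) • f β := by
  classical
  set s := hfin.toFinset
  have hα : α = s.piecewise (fun i => (α i * (β i)⁻¹) • β i) β := by
    funext i
    by_cases hi : i ∈ s
    · simp [s.piecewise_eq_of_mem _ _ hi, hβ i]
    · simpa [s.piecewise_eq_of_notMem _ _ hi, s] using hi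
  have hsupp : Function.mulSupport (fun i => α i * (β i)⁻¹) ⊆ s := fun i hi => by
    simp only [Function.mem_mulSupport, ne_eq, mul_inv_eq_one₀ (hβ i)] at hi
    simpa [s] using hi
  rw [finprod_eq_prod_of_mulSupport_subset _ hsupp, ← f.map_piecewise_smul, ← hα]

theorem tprod_sim_smul_and_span_general {I : Type*} (β : I → ℂ) (hβ : ∀ i, β i ≠ 0) :
    (∀ α : I → ℂ, (∀ i, α i ≠ 0) → {i | α i ≠ β i}.Finite →
      PiTensorProduct.tprod ℂ α =
        (∏ᶠ i, α i * (β i)⁻¹) • PiTensorProduct.tprod ℂ β) ∧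
    Submodule.span ℂ {t : ⨂[ℂ] _ : I, ℂ | ∃ α : I → ℂ,
        (∀ i, α i ≠ 0) ∧ {i | α i ≠ β i}.Finite ∧ t = PiTensorProduct.tprod ℂ α} =
      Submodule.span ℂ {PiTensorProduct.tprod ℂ β} := by
  have hsmul := fun (α : I → ℂ) (hfin : {i | α i ≠ β i}.Finite) =>
    (PiTensorProduct.tprod ℂ).map_eq_finprod_smul_of_finite_ne hβ hfin
  refine ⟨fun α _ hfin => hsmul α hfin, le_antisymm ?_ ?_⟩
  · rw [Submodule.span_le]
    rintro _ ⟨α, -, hfin, rfl⟩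
    exact Submodule.mem_span_singleton.2 ⟨_, (hsmul α hfin).symm⟩
  · exact Submodule.span_mono (Set.singleton_subset_iff.2 ⟨β, hβ, by simp, rfl⟩)

/-- In `⨂_{i∈I} ℂ`, for a nowhere-zero family `β`, every elementary tensor `⊗α` with `α`
nowhere zero and `α ∼ β` is the scalar multiple of `⊗β` by `∏_{i} α_i·β_i⁻¹` (a finite
product); consequently the span of all such `⊗α` is the line spanned by `⊗β`. -/
theorem tprod_sim_smul_and_span {I : Type*} [Infinite I] (β : I → ℂ) (hβ : ∀ i, β i ≠ 0) :
    (∀ α : I → ℂ, (∀ i, α i ≠ 0) → {i | α i ≠ β i}.Finite →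
      PiTensorProduct.tprod ℂ α =
        (∏ᶠ i, α i * (β i)⁻¹) • PiTensorProduct.tprod ℂ β) ∧
    Submodule.span ℂ {t : ⨂[ℂ] _ : I, ℂ | ∃ α : I → ℂ,
        (∀ i, α i ≠ 0) ∧ {i | α i ≠ β i}.Finite ∧ t = PiTensorProduct.tprod ℂ α} =
      Submodule.span ℂ {PiTensorProduct.tprod ℂ β} :=
  tprod_sim_smul_and_span_general β hβ
end

section
/- Let (G_i)_{i∈I} be a family of groups indexed by an infinite set I. The ℂ-algebra homomorphism λ : MonoidAlgebra ℂ (Π_{i∈I} G_i) → ⨂_{i∈I} MonoidAlgebra ℂ G_i, determined by λ(single g 1) = ⊗_i (single g_i 1) for g ∈ Π_{i∈I} G_i, is injective. In particular, the elements ⊗_i(single g_i 1), as g ranges over Π_{i∈I} G_i, are ℂ-linearly independent in ⨂_{i∈I} MonoidAlgebra ℂ G_i. -/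
/-!
Pairing with the product of the `g₀`-coordinates would single out `⊗ single (g₀ i) 1`, but an
infinite product of scalars is meaningless. Instead: `ℂˣ` is divisible, hence an injective
`ℤ`-module, so the product of finitely supported tuples extends to a character `χ` of `(ℂˣ)^I`.
Extending `χ` by zero gives a multilinear form `F` on `ℂ^I` with `F 1 = 1`, and `F` applied to the
`g₀`-coordinates of the factors is a functional on the tensor product that is `1` on
`⊗ single (g₀ i) 1` and `0` on every other `⊗ single (g i) 1`.
-/

open Function
open scoped TensorProduct

theorem DivisibleBy.exists_addMonoidHom_pi_single {ι A : Type*} [DecidableEq ι] [AddCommGroup A]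
    [DivisibleBy A ℤ] : ∃ f : (ι → A) →+ A, ∀ i a, f (Pi.single i a) = a := by
  obtain ⟨f, hf⟩ := (Module.Baer.of_divisible A).extension_property_addMonoidHom
    (Finsupp.coeFnAddHom : (ι →₀ A) →+ ι → A) DFunLike.coe_injective
    (Finsupp.liftAddHom fun _ => AddMonoidHom.id A)
  refine ⟨f, fun i a => ?_⟩
  rw [← Finsupp.single_eq_pi_single]
  exact (DFunLike.congr_fun hf (Finsupp.single i a)).trans (Finsupp.liftAddHom_apply_single _ i a)

namespace IsAlgClosed

variable (K : Type*) [Field K] [IsAlgClosed K]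

theorem surjective_pow_units {n : ℕ} (hn : n ≠ 0) : Surjective fun a : Kˣ => a ^ n := by
  intro x
  obtain ⟨z, hz⟩ := exists_pow_nat_eq (x : K) (Nat.pos_of_ne_zero hn)
  have hz0 : z ≠ 0 := by
    rintro rfl
    exact x.ne_zero (by rw [← hz, zero_pow hn])
  exact ⟨Units.mk0 z hz0, Units.ext (by simpa using hz)⟩

noncomputable instance : RootableBy Kˣ ℕ := rootableByOfPowLeftSurj _ _ (surjective_pow_units K)

noncomputable instance : DivisibleBy (Additive Kˣ) ℤ :=
  letI := Group.rootableByIntOfRootableByNat Kˣ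
  divisibleByOfSMulRightSurj _ _ fun hn => RootableBy.surjective_pow Kˣ ℤ hn

theorem exists_monoidHom_pi_units_mulSingle (ι : Type*) [DecidableEq ι] :
    ∃ χ : (ι → Kˣ) →* Kˣ, ∀ i a, χ (Pi.mulSingle i a) = a := by
  obtain ⟨f, hf⟩ := DivisibleBy.exists_addMonoidHom_pi_single (ι := ι) (A := Additive Kˣ)
  exact ⟨AddMonoidHom.toMultiplicative f, hf⟩

end IsAlgClosed

namespace MonoidHom

variable {K ι : Type*} [Field K] (χ : (ι → Kˣ) →* Kˣ)

open Classical in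
noncomputable def extendByZero (x : ι → K) : K :=
  if h : ∀ i, x i ≠ 0 then χ fun i => Units.mk0 (x i) (h i) else 0

theorem extendByZero_of_forall_ne_zero {x : ι → K} (h : ∀ i, x i ≠ 0) :
    χ.extendByZero x = χ fun i => Units.mk0 (x i) (h i) := by
  classical
  exact dif_pos h

theorem extendByZero_of_exists_eq_zero {x : ι → K} (h : ∃ i, x i = 0) :
    χ.extendByZero x = 0 := by
  classical
  exact dif_neg (by simpa using h)

theorem extendByZero_update [DecidableEq ι] (hχ : ∀ i a, χ (Pi.mulSingle i a) = a)
    (x : ι → K) (i : ι) (a : K) :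
    χ.extendByZero (update x i a) = a * χ.extendByZero (update x i 1) := by
  by_cases hx : ∃ j ≠ i, x j = 0
  · obtain ⟨j, hji, hj⟩ := hx
    have hzero : ∀ b, χ.extendByZero (update x i b) = 0 := fun b =>
      χ.extendByZero_of_exists_eq_zero ⟨j, by rwa [update_of_ne hji]⟩
    rw [hzero, hzero, mul_zero]
  push Not at hx
  rcases eq_or_ne a 0 with rfl | ha
  · rw [χ.extendByZero_of_exists_eq_zero ⟨i, update_self i 0 x⟩, zero_mul]
  have hne : ∀ b ≠ 0, ∀ j, update x i b j ≠ 0 := fun b hb j => by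
    rcases eq_or_ne j i with rfl | hji
    · simpa using hb
    · simpa [update_of_ne hji] using hx j hji
  have hsplit : (fun j => Units.mk0 _ (hne a ha j)) =
      (fun j => Units.mk0 _ (hne 1 one_ne_zero j)) * Pi.mulSingle i (Units.mk0 a ha) := by
    ext j
    rcases eq_or_ne j i with rfl | hji
    · simp
    · simp [update_of_ne hji, Pi.mulSingle_eq_of_ne hji]
  rw [χ.extendByZero_of_forall_ne_zero (hne a ha), χ.extendByZero_of_forall_ne_zero
    (hne 1 one_ne_zero), hsplit, map_mul, hχ, Units.val_mul, Units.val_mk0, mul_comm]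

noncomputable def toMultilinearMap [dec : DecidableEq ι]
    (hχ : ∀ i a, χ (Pi.mulSingle i a) = a) : MultilinearMap K (fun _ : ι => K) K where
  toFun := χ.extendByZero
  map_update_add' {inst} m i x y := by
    obtain rfl : inst = dec := Subsingleton.elim _ _
    rw [χ.extendByZero_update hχ m i (x + y), χ.extendByZero_update hχ m i x,
      χ.extendByZero_update hχ m i y, add_mul]
  map_update_smul' {inst} m i c x := by
    obtain rfl : inst = dec := Subsingleton.elim _ _
    rw [χ.extendByZero_update hχ m i (c • x), χ.extendByZero_update hχ m i x, smul_eq_mul,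
      smul_eq_mul, mul_assoc]

theorem toMultilinearMap_one [DecidableEq ι] (hχ : ∀ i a, χ (Pi.mulSingle i a) = a) :
    χ.toMultilinearMap hχ 1 = 1 := by
  rw [toMultilinearMap, MultilinearMap.coe_mk,
    χ.extendByZero_of_forall_ne_zero (x := 1) fun _ => one_ne_zero]
  simp only [Pi.one_apply, Units.mk0_one]
  exact congrArg Units.val (map_one χ)

end MonoidHom

theorem IsAlgClosed.exists_multilinearMap_eq_one (K ι : Type*) [Field K] [IsAlgClosed K] :
    ∃ F : MultilinearMap K (fun _ : ι => K) K, F 1 = 1 := by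
  classical
  obtain ⟨χ, hχ⟩ := IsAlgClosed.exists_monoidHom_pi_units_mulSingle K ι
  exact ⟨χ.toMultilinearMap hχ, χ.toMultilinearMap_one hχ⟩

theorem PiTensorProduct.linearIndependent_tprod_basis {K ι : Type*} [Field K] [IsAlgClosed K]
    {κ M : ι → Type*} [∀ i, AddCommGroup (M i)] [∀ i, Module K (M i)]
    (b : ∀ i, Module.Basis (κ i) K (M i)) :
    LinearIndependent K fun g : ∀ i, κ i => tprod K fun i => b i (g i) := by
  obtain ⟨F, hF⟩ := IsAlgClosed.exists_multilinearMap_eq_one K ι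
  let coordTensor (g : ∀ i, κ i) : Module.Dual K (⨂[K] i, M i) :=
    lift (F.compLinearMap fun i => (b i).coord (g i))
  have coordTensor_tprod (g h : ∀ i, κ i) : coordTensor g (tprod K fun i => b i (h i)) =
      F fun i => (Finsupp.single (h i) 1 : κ i →₀ K) (g i) := by
    simp [coordTensor]
  refine .of_pairwise_dual_eq_zero_one _ coordTensor (fun g h hgh => ?_) (fun g => ?_)
  · obtain ⟨i, hi⟩ := Function.ne_iff.mp hgh
    rw [coordTensor_tprod]
    exact F.map_coord_zero i (Finsupp.single_eq_of_ne hi)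
  · rw [coordTensor_tprod]
    simp only [Finsupp.single_eq_same]
    exact hF

theorem monoidAlgebra_pi_to_piTensor_injective_general {I : Type*}
    (G : I → Type*) [∀ i, Group (G i)]
    (lam : MonoidAlgebra ℂ (∀ i, G i) →ₐ[ℂ] ⨂[ℂ] i, MonoidAlgebra ℂ (G i))
    (hlam : ∀ g : ∀ i, G i,
      lam (MonoidAlgebra.single g 1) =
        PiTensorProduct.tprod ℂ (fun i => MonoidAlgebra.single (g i) (1 : ℂ))) :
    Function.Injective lam ∧
      LinearIndependent ℂ (fun g : ∀ i, G i =>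
        PiTensorProduct.tprod ℂ (fun i => MonoidAlgebra.single (g i) (1 : ℂ))) := by
  have hli := PiTensorProduct.linearIndependent_tprod_basis fun i => MonoidAlgebra.basis (G i) ℂ
  simp only [MonoidAlgebra.basis_apply] at hli
  refine ⟨LinearMap.injective_of_linearIndependent (f := lam.toLinearMap)
    (MonoidAlgebra.basis _ ℂ).span_eq ?_, hli⟩
  rwa [show ⇑lam.toLinearMap ∘ ⇑(MonoidAlgebra.basis _ ℂ) = _ from funext hlam]

/-- The `ℂ`-algebra homomorphism `λ : ℂ[Π_{i∈I} G_i] → ⨂_{i∈I} ℂ[G_i]`, determined by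
`λ(single g 1) = ⊗(single gᵢ 1)`, is injective; in particular the elementary tensors
`⊗(single gᵢ 1)`, `g ∈ Π_{i∈I} G_i`, are linearly independent. -/
theorem monoidAlgebra_pi_to_piTensor_injective {I : Type*} [Infinite I]
    (G : I → Type*) [∀ i, Group (G i)]
    (lam : MonoidAlgebra ℂ (∀ i, G i) →ₐ[ℂ] ⨂[ℂ] i, MonoidAlgebra ℂ (G i))
    (hlam : ∀ g : ∀ i, G i,
      lam (MonoidAlgebra.single g 1) =
        PiTensorProduct.tprod ℂ (fun i => MonoidAlgebra.single (g i) (1 : ℂ))) :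
    Function.Injective lam ∧
      LinearIndependent ℂ (fun g : ∀ i, G i =>
        PiTensorProduct.tprod ℂ (fun i => MonoidAlgebra.single (g i) (1 : ℂ))) :=
  monoidAlgebra_pi_to_piTensor_injective_general G lam hlam
end

section
/- Let (A_i)_{i∈I} be unital *-algebras over ℂ and suppose there is a finite subset F₀ ⊆ I such that for every i ∈ I∖F₀, A_i equals the ℂ-linear span of its unitary elements. Then for every u ∈ Π_{i∈I} unitary A_i, the class [u] lies in the center of the group Ω^ut_{I;A} if and only if u_i lies in the center of A_i for all but finitely many i ∈ I. Consequently, Ω^ut_{I;A} is equal to its center (i.e. is abelian) if and only if all but finitely many of the A_i are commutative. -/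
/-!
`[u]` is central iff for every `w` the commutator of `w` and `u` is finitely supported. Off `F₀`
the unitaries span `A_i`, so an element commuting with all unitaries is central. Hence if `u_i` were
non-central for infinitely many `i`, choosing there a unitary `w_i` not commuting with `u_i` would
give a `w` whose commutator with `u` has infinite support.
-/

open scoped TensorProduct

variable {I : Type*} (A : I → Type*) [∀ i, Ring (A i)] [∀ i, Algebra ℂ (A i)]
  [∀ i, StarRing (A i)] [∀ i, StarModule ℂ (A i)]

/-- The normal subgroup `N` of `Π_{i∈I} U(A_i)` consisting of the families of unitaries
that equal `1` at all but finitely many coordinates. -/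
def unitaryFinSupport : Subgroup (∀ i, unitary (A i)) where
  carrier := {u | {i | u i ≠ 1}.Finite}
  one_mem' := by simp
  mul_mem' := by
    intro a b ha hb
    refine (ha.union hb).subset fun i hi => ?_
    by_cases h1 : a i = 1
    · exact Or.inr fun e => hi (by rw [Pi.mul_apply, h1, e, one_mul])
    · exact Or.inl h1
  inv_mem' := by
    intro a ha
    exact ha.subset fun i hi => fun e => hi (by rw [Pi.inv_apply, e, inv_one])

instance unitaryFinSupport_normal : (unitaryFinSupport A).Normal := by
  constructor
  intro n hn g
  refine hn.subset fun i hi => ?_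
  intro e
  exact hi (by rw [Pi.mul_apply, Pi.mul_apply, Pi.inv_apply, e, mul_one, mul_inv_cancel])

section SpanCommute

variable {R B : Type*} [CommSemiring R] [Semiring B] [Algebra R B] {s : Set B}

theorem mem_center_of_forall_commute (hs : Submodule.span R s = ⊤) {a : B}
    (h : ∀ x ∈ s, Commute x a) : a ∈ Set.center B := by
  refine Semigroup.mem_center_iff.2 fun b => ?_
  have hb : b ∈ Submodule.span R s := hs ▸ Submodule.mem_top
  change Commute b a
  induction hb using Submodule.span_induction with
  | mem x hx => exact h x hx
  | zero => exact Commute.zero_left a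
  | add x y _ _ hx hy => exact hx.add_left hy
  | smul r x _ hx => exact hx.smul_left r

theorem exists_mem_not_mem_center_of_span_eq_top (hs : Submodule.span R s = ⊤)
    (hB : ¬ ∀ a b : B, a * b = b * a) : ∃ x ∈ s, x ∉ Set.center B := by
  by_contra! hcentral
  refine hB fun a b => ?_
  have ha : a ∈ Set.center B := mem_center_of_forall_commute hs fun x hx =>
    (Semigroup.mem_center_iff.1 (hcentral x hx) a).symm
  exact (Semigroup.mem_center_iff.1 ha b).symm

end SpanCommute

section OmegaUt

variable {ι : Type*} {B : ι → Type*} [∀ i, Ring (B i)] [∀ i, StarRing (B i)]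

theorem mk_mem_center_unitaryFinSupport_iff (u : ∀ i, unitary (B i)) :
    (QuotientGroup.mk u : (∀ i, unitary (B i)) ⧸ unitaryFinSupport B) ∈ Subgroup.center _ ↔
      ∀ w : ∀ i, unitary (B i), {i | ¬ Commute (w i : B i) (u i)}.Finite := by
  simp only [Subgroup.mem_center_iff, QuotientGroup.mk_surjective.forall, ← QuotientGroup.mk_mul,
    QuotientGroup.eq]
  refine forall_congr' fun w => Iff.of_eq (congrArg Set.Finite (Set.ext fun i => ?_))
  simp only [ne_eq, Pi.mul_apply, Pi.inv_apply, inv_mul_eq_one, commute_iff_eq,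
    Subtype.ext_iff, Submonoid.coe_mul]

variable {R : Type*} [CommSemiring R] [∀ i, Algebra R (B i)]

theorem mk_mem_center_iff_finite_not_mem_center (F₀ : Finset ι)
    (hB : ∀ i ∉ F₀, Submodule.span R (unitary (B i) : Set (B i)) = ⊤)
    (u : ∀ i, unitary (B i)) :
    (QuotientGroup.mk u : (∀ i, unitary (B i)) ⧸ unitaryFinSupport B) ∈ Subgroup.center _ ↔
      {i | (u i : B i) ∉ Set.center (B i)}.Finite := by
  rw [mk_mem_center_unitaryFinSupport_iff]
  refine ⟨fun h => ?_, fun h w => h.subset fun i hi hu => hi (Semigroup.mem_center_iff.1 hu _)⟩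
  have hw : ∀ i ∉ F₀, (u i : B i) ∉ Set.center (B i) →
      ∃ w : unitary (B i), ¬ Commute (w : B i) (u i) := fun i hi hu => by
    by_contra! hw
    exact hu (mem_center_of_forall_commute (hB i hi) fun x hx => hw ⟨x, hx⟩)
  choose! w hw using hw
  refine ((h w).union F₀.finite_toSet).subset fun i hu => ?_
  by_cases hi : i ∈ F₀
  · exact Or.inr hi
  · exact Or.inl (hw i hi hu)

theorem center_eq_top_iff_finite_not_commutative (F₀ : Finset ι)
    (hB : ∀ i ∉ F₀, Submodule.span R (unitary (B i) : Set (B i)) = ⊤) :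
    Subgroup.center ((∀ i, unitary (B i)) ⧸ unitaryFinSupport B) = ⊤ ↔
      {i | ¬ ∀ a b : B i, a * b = b * a}.Finite := by
  refine ⟨fun htop => ?_, fun h => ?_⟩
  · have hu : ∀ i ∉ F₀, (¬ ∀ a b : B i, a * b = b * a) →
        ∃ u : unitary (B i), (u : B i) ∉ Set.center (B i) := fun i hi hnc => by
      obtain ⟨x, hx, hxc⟩ := exists_mem_not_mem_center_of_span_eq_top (hB i hi) hnc
      exact ⟨⟨x, hx⟩, hxc⟩
    choose! u hu using hu
    have hfin := (mk_mem_center_iff_finite_not_mem_center F₀ hB u).1 (htop ▸ Subgroup.mem_top _)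
    refine (hfin.union F₀.finite_toSet).subset fun i hnc => ?_
    by_cases hi : i ∈ F₀
    · exact Or.inr hi
    · exact Or.inl (hu i hi hnc)
  · refine (Subgroup.eq_top_iff' _).2 (QuotientGroup.mk_surjective.forall.2 fun w => ?_)
    refine (mk_mem_center_iff_finite_not_mem_center F₀ hB w).2 (h.subset fun i hi hcomm => ?_)
    exact hi (Semigroup.mem_center_iff.2 fun a => hcomm a _)

end OmegaUt

theorem center_omega_ut_general {I : Type*}
    (A : I → Type*) [∀ i, Ring (A i)] [∀ i, Algebra ℂ (A i)]
    [∀ i, StarRing (A i)]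
    (F₀ : Finset I)
    (hA : ∀ i ∉ F₀, Submodule.span ℂ (unitary (A i) : Set (A i)) = ⊤) :
    (∀ u : ∀ i, unitary (A i),
      ((QuotientGroup.mk u : (∀ i, unitary (A i)) ⧸ unitaryFinSupport A) ∈
          Subgroup.center ((∀ i, unitary (A i)) ⧸ unitaryFinSupport A) ↔
        {i | (u i : A i) ∉ Set.center (A i)}.Finite)) ∧
    (Subgroup.center ((∀ i, unitary (A i)) ⧸ unitaryFinSupport A) = ⊤ ↔
      {i | ¬ ∀ a b : A i, a * b = b * a}.Finite) :=
  ⟨mk_mem_center_iff_finite_not_mem_center F₀ hA, center_eq_top_iff_finite_not_commutative F₀ hA⟩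

/-- For unital `*`-algebras `A_i` all but finitely many of which are spanned by their
unitaries, a class `[u]` is central in `Ω^ut_{I;A}` iff `u_i` is central in `A_i` for all but
finitely many `i`; consequently `Ω^ut_{I;A}` is abelian iff all but finitely many `A_i`
are commutative. -/
theorem center_omega_ut {I : Type*} [Infinite I]
    (A : I → Type*) [∀ i, Ring (A i)] [∀ i, Algebra ℂ (A i)]
    [∀ i, StarRing (A i)] [∀ i, StarModule ℂ (A i)]
    (F₀ : Finset I)
    (hA : ∀ i ∉ F₀, Submodule.span ℂ (unitary (A i) : Set (A i)) = ⊤) :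
    (∀ u : ∀ i, unitary (A i),
      ((QuotientGroup.mk u : (∀ i, unitary (A i)) ⧸ unitaryFinSupport A) ∈
          Subgroup.center ((∀ i, unitary (A i)) ⧸ unitaryFinSupport A) ↔
        {i | (u i : A i) ∉ Set.center (A i)}.Finite)) ∧
    (Subgroup.center ((∀ i, unitary (A i)) ⧸ unitaryFinSupport A) = ⊤ ↔
      {i | ¬ ∀ a b : A i, a * b = b * a}.Finite) :=
  center_omega_ut_general A F₀ hA
end

section
/- Let (A_i)_{i∈I} be unital *-algebras over ℂ and suppose there is a finite subset F₀ ⊆ I such that for every i ∈ I∖F₀, A_i equals the ℂ-linear span of its unitary elements. If u ∈ Π_{i∈I} unitary A_i is such that the set {i ∈ I : u_i does not lie in the center of A_i} is infinite, then the conjugacy class {g·[u]·g⁻¹ : g ∈ Ω^ut_{I;A}} of [u] in Ω^ut_{I;A} is an infinite set. -/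
open scoped TensorProduct

variable {I : Type*} (A : I → Type*) [∀ i, Ring (A i)] [∀ i, Algebra ℂ (A i)]
  [∀ i, StarRing (A i)] [∀ i, StarModule ℂ (A i)]

/-! Outside `F₀` the algebra `A i` is spanned by its unitaries, so `u i` is non-central exactly when
it fails to commute with some unitary `v i`. Split the infinite set of such indices into infinitely
many disjoint infinite blocks `T n` and let `g n` be `v` on `T n` and `1` elsewhere. The conjugates
`g n * u * (g n)⁻¹` and `g m * u * (g m)⁻¹` differ at every index of `T n`, so their classes modulo
finitely supported families are pairwise distinct. -/

theorem mem_center_of_commute_of_span_eq_top {R A : Type*} [CommSemiring R] [Semiring A]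
    [Algebra R A] {s : Set A} (hs : Submodule.span R s = ⊤) {a : A}
    (ha : ∀ b ∈ s, Commute b a) : a ∈ Set.center A := by
  have hspan : Submodule.span R s ≤ Subalgebra.toSubmodule (Subalgebra.centralizer R {a}) :=
    Submodule.span_le.mpr fun b hb => Set.mem_centralizer_iff.mpr <| by simpa using (ha b hb).symm.eq
  rw [hs] at hspan
  exact Semigroup.mem_center_iff.mpr fun b =>
    (Set.mem_centralizer_iff.mp (hspan (Submodule.mem_top (x := b))) a rfl).symm

open Function in
theorem Set.Infinite.exists_pairwise_disjoint_infinite {α : Type*} {s : Set α} (hs : s.Infinite) :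
    ∃ T : ℕ → Set α, (∀ n, T n ⊆ s) ∧ (∀ n, (T n).Infinite) ∧ Pairwise (Disjoint on T) := by
  let f := hs.natEmbedding s
  refine ⟨fun n => Set.range fun k => (f (Nat.pair n k) : α), ?_, fun n => ?_, ?_⟩
  · rintro n _ ⟨k, rfl⟩
    exact (f _).2
  · refine Set.infinite_range_of_injective fun k l hkl => ?_
    simpa [Nat.pair_eq_pair] using f.injective (Subtype.val_injective hkl)
  · intro m n hmn
    refine Set.disjoint_left.mpr ?_
    rintro _ ⟨k, rfl⟩ ⟨l, hl⟩
    exact hmn (Nat.pair_eq_pair.mp (f.injective (Subtype.val_injective hl)).symm).1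

section

variable {ι : Type*} {G : ι → Type*} [∀ i, Group (G i)] (N : Subgroup (∀ i, G i))

theorem QuotientGroup.mk_ne_mk_of_infinite_ne (hN : ∀ n ∈ N, {i | n i ≠ 1}.Finite)
    {a b : ∀ i, G i} (hab : {i | a i ≠ b i}.Infinite) : (a : (∀ i, G i) ⧸ N) ≠ b := fun h =>
  hab <| (hN _ (QuotientGroup.eq.mp h)).subset fun i hi => by
    simpa [inv_mul_eq_one] using hi

theorem infinite_conjugatesOf_mk [N.Normal] (hN : ∀ n ∈ N, {i | n i ≠ 1}.Finite) {u : ∀ i, G i}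
    (hu : {i | u i ∉ Subgroup.center (G i)}.Infinite) :
    (conjugatesOf (u : (∀ i, G i) ⧸ N)).Infinite := by
  have hconj : ∀ i ∈ {i | u i ∉ Subgroup.center (G i)}, ∃ v, v * u i * v⁻¹ ≠ u i := by
    intro i hi
    obtain ⟨v, hv⟩ := not_forall.mp (mt Subgroup.mem_center_iff.mpr hi)
    exact ⟨v, fun h => hv (mul_inv_eq_iff_eq_mul.mp h)⟩
  choose! v hv using hconj
  classical
  obtain ⟨T, hTu, hTinf, hTdisj⟩ := hu.exists_pairwise_disjoint_infinite
  let g n : ∀ i, G i := (T n).piecewise v 1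
  refine Set.infinite_of_injective_forall_mem
    (f := fun n => ((g n * u * (g n)⁻¹ : ∀ i, G i) : (∀ i, G i) ⧸ N)) (fun m n hmn => ?_)
    fun n => isConj_iff.mpr ⟨g n, by simp⟩
  by_contra hne
  refine QuotientGroup.mk_ne_mk_of_infinite_ne N hN ((hTinf n).mono fun i hin => ?_) hmn
  have him : i ∉ T m := Set.disjoint_right.mp (hTdisj hne) hin
  simpa [g, him, hin, eq_comm] using hv i (hTu n hin)

end

theorem coe_mem_center_of_mem_center_unitary {R A : Type*} [CommSemiring R] [Semiring A]
    [StarMul A] [Algebra R A] (hA : Submodule.span R (unitary A : Set A) = ⊤)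
    {u : unitary A} (hu : u ∈ Subgroup.center (unitary A)) : (u : A) ∈ Set.center A :=
  mem_center_of_commute_of_span_eq_top hA fun b hb =>
    congrArg Subtype.val (Subgroup.mem_center_iff.mp hu ⟨b, hb⟩)

theorem conjugacy_class_infinite_general {I : Type*}
    (A : I → Type*) [∀ i, Ring (A i)] [∀ i, Algebra ℂ (A i)]
    [∀ i, StarRing (A i)]
    (F₀ : Finset I)
    (hA : ∀ i ∉ F₀, Submodule.span ℂ (unitary (A i) : Set (A i)) = ⊤)
    (u : ∀ i, unitary (A i))
    (hu : {i | (u i : A i) ∉ Set.center (A i)}.Infinite) :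
    {x : (∀ i, unitary (A i)) ⧸ unitaryFinSupport A |
      ∃ g : (∀ i, unitary (A i)) ⧸ unitaryFinSupport A,
        x = g * QuotientGroup.mk u * g⁻¹}.Infinite := by
  have hS : {i | u i ∉ Subgroup.center (unitary (A i))}.Infinite :=
    (hu.sdiff F₀.finite_toSet).mono fun i hi =>
      mt (coe_mem_center_of_mem_center_unitary (hA i hi.2)) hi.1
  convert infinite_conjugatesOf_mk (unitaryFinSupport A) (fun _ hn => hn) hS using 1
  ext x
  simp [conjugatesOf, isConj_iff, eq_comm]

/-- If `u_i` fails to be central in `A_i` for infinitely many `i`, then the conjugacy class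
of `[u]` in `Ω^ut_{I;A}` is infinite (assuming all but finitely many `A_i` are spanned by
their unitaries). -/
theorem conjugacy_class_infinite {I : Type*} [Infinite I]
    (A : I → Type*) [∀ i, Ring (A i)] [∀ i, Algebra ℂ (A i)]
    [∀ i, StarRing (A i)] [∀ i, StarModule ℂ (A i)]
    (F₀ : Finset I)
    (hA : ∀ i ∉ F₀, Submodule.span ℂ (unitary (A i) : Set (A i)) = ⊤)
    (u : ∀ i, unitary (A i))
    (hu : {i | (u i : A i) ∉ Set.center (A i)}.Infinite) :
    {x : (∀ i, unitary (A i)) ⧸ unitaryFinSupport A |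
      ∃ g : (∀ i, unitary (A i)) ⧸ unitaryFinSupport A,
        x = g * QuotientGroup.mk u * g⁻¹}.Infinite :=
  conjugacy_class_infinite_general A F₀ hA u hu
end

section
/- Let n ∈ ℕ, λ : Fin n → ℂ, and let x⁽¹⁾, …, x⁽ⁿ⁾ ∈ Π_{i∈I} H_i satisfy ‖x⁽ᵏ⁾_i‖ ≤ 1 for every k and every i ∈ I. Then the complex number z := Σ_{k,l} conj(λ_k)·λ_l·h(x⁽ᵏ⁾, x⁽ˡ⁾) is a nonnegative real number: z.im = 0 and 0 ≤ z.re. -/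
open scoped TensorProduct Classical ComplexConjugate

/-- The form `h(x,y)`: the (finite) product `∏_{i∈I} ⟪x_i, y_i⟫` when `⟪x_i, y_i⟫ = 1` for
all but finitely many `i`, and `0` otherwise. -/
noncomputable def hform {I : Type*} (H : I → Type*) [∀ i, NormedAddCommGroup (H i)]
    [∀ i, InnerProductSpace ℂ (H i)] (x y : ∀ i, H i) : ℂ :=
  if {i | (inner ℂ (x i) (y i) : ℂ) ≠ 1}.Finite then ∏ᶠ i, (inner ℂ (x i) (y i) : ℂ) else 0

/-
For vectors of norm at most `1`, `⟪u, v⟫ = 1` forces `u = v`. Hence the relation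
`r k l :⟺ ⟪x⁽ᵏ⁾ᵢ, x⁽ˡ⁾ᵢ⟫ = 1 for almost all i` is symmetric and transitive, and
`h(x⁽ᵏ⁾, x⁽ˡ⁾) = 0` unless `r k l`. For a finite `S ⊆ I` containing the exceptional coordinates
of all `r`-related pairs, the matrix `h(x⁽ᵏ⁾, x⁽ˡ⁾)` is the entrywise product of the Gram matrices
`⟪x⁽ᵏ⁾ᵢ, x⁽ˡ⁾ᵢ⟫`, `i ∈ S`, and of the `0/1` matrix of `r`. All factors are positive semidefinite,
hence so is the product (Schur product theorem), and `z` is its quadratic form at `λ`.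
-/

open Function Matrix
open scoped ComplexOrder

namespace Matrix

variable {ι 𝕜 : Type*} [RCLike 𝕜]

theorem posSemidef_entrywise_prod [Finite ι] {κ : Type*} (s : Finset κ) {A : κ → Matrix ι ι 𝕜}
    (hA : ∀ j ∈ s, (A j).PosSemidef) : (of fun k l => ∏ j ∈ s, A j k l).PosSemidef := by
  induction s using Finset.induction_on with
  | empty =>
    convert posSemidef_gram 𝕜 fun _ : ι => (1 : 𝕜) using 1
    ext
    simp
  | insert j s hj ih =>
    convert (hA j (s.mem_insert_self j)).hadamard
      (ih fun i hi => hA i (s.mem_insert_of_mem hi)) using 1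
    ext k l
    simp [Finset.prod_insert hj, hadamard_apply]

-- The Gram matrix of the basis vectors `e_{r a}` indexed by the classes `{b | r a b}`, with `0`
-- in place of `e_{r a}` when `¬ r a a` (then the class is empty and would collide with others).
theorem posSemidef_indicator_of_symm_of_trans [Fintype ι] (r : ι → ι → Prop)
    (symm : ∀ {a b}, r a b → r b a) (trans : ∀ {a b c}, r a b → r b c → r a c) :
    (of fun a b => if r a b then (1 : 𝕜) else 0).PosSemidef := by
  let v : ι → EuclideanSpace 𝕜 (Finset ι) := fun a =>
    EuclideanSpace.single (Finset.univ.filter (r a)) (if r a a then 1 else 0)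
  convert posSemidef_gram 𝕜 v using 1
  ext a b
  simp only [of_apply, gram_apply, v, EuclideanSpace.inner_single_left, PiLp.single_apply]
  by_cases hab : r a b
  · have hC : Finset.univ.filter (r a) = Finset.univ.filter (r b) := by
      ext c
      simpa using ⟨trans (symm hab), trans hab⟩
    simp [hab, hC, trans hab (symm hab), trans (symm hab) hab]
  · have hC (hbb : r b b) : Finset.univ.filter (r a) ≠ Finset.univ.filter (r b) := fun h =>
      hab (by simpa [hbb] using Finset.ext_iff.1 h b)
    by_cases hbb : r b b <;> simp [hab, hbb, hC]

end Matrix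

theorem eq_of_inner_eq_one_of_norm_le_one {𝕜 E : Type*} [RCLike 𝕜] [NormedAddCommGroup E]
    [InnerProductSpace 𝕜 E]
    {u v : E} (hu : ‖u‖ ≤ 1) (hv : ‖v‖ ≤ 1) (h : inner 𝕜 u v = 1) : u = v := by
  have huv : 1 ≤ ‖u‖ * ‖v‖ := by simpa [h] using norm_inner_le_norm (𝕜 := 𝕜) u v
  have hu1 : ‖u‖ = 1 := le_antisymm hu (by nlinarith [norm_nonneg u, norm_nonneg v])
  have hv1 : ‖v‖ = 1 := le_antisymm hv (by nlinarith [norm_nonneg u, norm_nonneg v])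
  exact (inner_eq_one_iff_of_norm_eq_one hu1 hv1).mp h

section hform

variable {I : Type*} {H : I → Type*} [∀ i, NormedAddCommGroup (H i)]
  [∀ i, InnerProductSpace ℂ (H i)]

theorem mulSupport_inner_comm (x y : ∀ i, H i) :
    mulSupport (fun i => inner ℂ (y i) (x i)) = mulSupport (fun i => inner ℂ (x i) (y i)) := by
  ext i
  rw [mem_mulSupport, mem_mulSupport, ← inner_conj_symm, Ne, Ne,
    map_eq_one_iff _ (RingHom.injective _)]

theorem mulSupport_inner_subset_union {x y z : ∀ i, H i} (hx : ∀ i, ‖x i‖ ≤ 1)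
    (hy : ∀ i, ‖y i‖ ≤ 1) :
    mulSupport (fun i => inner ℂ (x i) (z i)) ⊆
      mulSupport (fun i => inner ℂ (x i) (y i)) ∪ mulSupport (fun i => inner ℂ (y i) (z i)) := by
  intro i hxz
  rw [mem_mulSupport] at hxz
  by_contra! h
  simp only [Set.mem_union, mem_mulSupport, not_or, not_not] at h
  exact hxz (by rw [eq_of_inner_eq_one_of_norm_le_one (hx i) (hy i) h.1, h.2])

theorem hform_eq_prod {x y : ∀ i, H i} {S : Finset I}
    (h : mulSupport (fun i => inner ℂ (x i) (y i)) ⊆ S) :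
    hform H x y = ∏ i ∈ S, inner ℂ (x i) (y i) := by
  rw [hform, if_pos (show {i | inner ℂ (x i) (y i) ≠ 1}.Finite from S.finite_toSet.subset h)]
  exact finprod_eq_prod_of_mulSupport_subset _ h

theorem hform_eq_zero {x y : ∀ i, H i}
    (h : ¬ (mulSupport fun i => inner ℂ (x i) (y i)).Finite) : hform H x y = 0 :=
  if_neg h

theorem posSemidef_hform {ι : Type*} [Fintype ι] (x : ι → ∀ i, H i) (hx : ∀ k i, ‖x k i‖ ≤ 1) :
    (of fun k l => hform H (x k) (x l)).PosSemidef := by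
  set r : ι → ι → Prop := fun k l => (mulSupport fun i => inner ℂ (x k i) (x l i)).Finite
  have symm {k l} (h : r k l) : r l k := by simpa only [r, mulSupport_inner_comm] using h
  have trans {k l m} (h₁ : r k l) (h₂ : r l m) : r k m :=
    (h₁.union h₂).subset (mulSupport_inner_subset_union (hx k) (hx l))
  have hfin : (⋃ k, ⋃ l, ⋃ (_ : r k l), mulSupport fun i => inner ℂ (x k i) (x l i)).Finite :=
    Set.finite_iUnion fun k => Set.finite_iUnion fun l => Set.finite_iUnion fun h => h
  have hsupp (k l) (h : r k l) : (mulSupport fun i => inner ℂ (x k i) (x l i)) ⊆ hfin.toFinset := by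
    intro i hi
    simp only [Set.Finite.coe_toFinset, Set.mem_iUnion]
    exact ⟨k, l, h, hi⟩
  have hK : (of fun k l => hform H (x k) (x l)) =
      (of fun k l => ∏ i ∈ hfin.toFinset, gram ℂ (fun k => x k i) k l) ⊙
        of fun k l => if r k l then 1 else 0 := by
    ext k l
    by_cases h : r k l
    · simp [h, hform_eq_prod (hsupp k l h)]
    · simp [h, hform_eq_zero h]
  rw [hK]
  exact (posSemidef_entrywise_prod _ fun i _ => posSemidef_gram ℂ fun k => x k i).hadamard
    (posSemidef_indicator_of_symm_of_trans r symm trans)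

end hform

theorem hform_positive_general {I : Type*} (H : I → Type*)
    [∀ i, NormedAddCommGroup (H i)] [∀ i, InnerProductSpace ℂ (H i)]
    (n : ℕ) (lam : Fin n → ℂ) (x : Fin n → ∀ i, H i)
    (hx : ∀ k i, ‖x k i‖ ≤ 1) :
    (∑ k, ∑ l, conj (lam k) * lam l * hform H (x k) (x l)).im = 0 ∧
      0 ≤ (∑ k, ∑ l, conj (lam k) * lam l * hform H (x k) (x l)).re := by
  have hz : ∑ k, ∑ l, conj (lam k) * lam l * hform H (x k) (x l) =
      star lam ⬝ᵥ (of fun k l => hform H (x k) (x l)) *ᵥ lam := by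
    simp only [dotProduct, mulVec, Finset.mul_sum, Pi.star_apply, RCLike.star_def, of_apply]
    exact Finset.sum_congr rfl fun k _ => Finset.sum_congr rfl fun l _ => by ring
  obtain ⟨hre, him⟩ := Complex.nonneg_iff.mp ((posSemidef_hform x hx).dotProduct_mulVec_nonneg lam)
  rw [hz]
  exact ⟨him.symm, hre⟩

/-- For families of vectors of norm at most `1`, the quadratic expression
`Σ_{k,l} conj(λ_k)·λ_l·h(x⁽ᵏ⁾, x⁽ˡ⁾)` is a nonnegative real number. -/
theorem hform_positive {I : Type*} [Infinite I] (H : I → Type*)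
    [∀ i, NormedAddCommGroup (H i)] [∀ i, InnerProductSpace ℂ (H i)]
    (n : ℕ) (lam : Fin n → ℂ) (x : Fin n → ∀ i, H i)
    (hx : ∀ k i, ‖x k i‖ ≤ 1) :
    (∑ k, ∑ l, conj (lam k) * lam l * hform H (x k) (x l)).im = 0 ∧
      0 ≤ (∑ k, ∑ l, conj (lam k) * lam l * hform H (x k) (x l)).re :=
  hform_positive_general H n lam x hx
end

section
/- Let ⨂^ct_{i∈I} H_i denote the ℂ-linear span in ⨂_{i∈I} H_i of {⊗x : x ∈ Π_{i∈I} H_i, ‖x_i‖ ≤ 1 for every i}, and let K̃ denote the ℂ-linear span of {⊗x : x ∈ Π_{i∈I} H_i, ‖x_i‖ ≤ 1 for every i and ‖x_i‖ < 1 for infinitely many i}. Then ⨂^ct_{i∈I} H_i is the internal direct sum of K̃ and ⨂^un_{i∈I} H_i: their join (sum) is ⨂^ct_{i∈I} H_i and their intersection is the zero submodule. -/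
open scoped TensorProduct

/-- `⨂^un_{i∈I} H_i`: the span in `⨂_{i∈I} H_i` of the elementary tensors of families of
unit vectors. -/
noncomputable def unTensorSpan {I : Type*} (H : I → Type*) [∀ i, NormedAddCommGroup (H i)]
    [∀ i, InnerProductSpace ℂ (H i)] : Submodule ℂ (⨂[ℂ] i, H i) :=
  Submodule.span ℂ {t | ∃ x : ∀ i, H i, (∀ i, ‖x i‖ = 1) ∧ t = PiTensorProduct.tprod ℂ x}

/-- `⨂^ct_{i∈I} H_i`: the span of the elementary tensors of families of vectors of norm at
most `1`. -/
noncomputable def ctTensorSpan {I : Type*} (H : I → Type*) [∀ i, NormedAddCommGroup (H i)]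
    [∀ i, InnerProductSpace ℂ (H i)] : Submodule ℂ (⨂[ℂ] i, H i) :=
  Submodule.span ℂ {t | ∃ x : ∀ i, H i, (∀ i, ‖x i‖ ≤ 1) ∧ t = PiTensorProduct.tprod ℂ x}

/-- `K̃`: the span of the elementary tensors of families of vectors of norm at most `1`,
infinitely many of which have norm strictly less than `1`. -/
noncomputable def ktilTensorSpan {I : Type*} (H : I → Type*) [∀ i, NormedAddCommGroup (H i)]
    [∀ i, InnerProductSpace ℂ (H i)] : Submodule ℂ (⨂[ℂ] i, H i) :=
  Submodule.span ℂ {t | ∃ x : ∀ i, H i,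
    ((∀ i, ‖x i‖ ≤ 1) ∧ {i | ‖x i‖ < 1}.Infinite) ∧ t = PiTensorProduct.tprod ℂ x}

/-!
Every generator `⊗x` of `⨂^ct` with only finitely many `‖x_i‖ < 1` is, after normalising those
finitely many factors, a multiple of a generator of `⨂^un`; the others are generators of `K̃`.
The intersection is trivial because the multilinear map sending `x` to `⊗x` when `‖x_i‖ = 1` for
all but finitely many `i`, and to `0` otherwise, induces a linear map that kills `K̃` and fixes
`⨂^un`.
-/

section Indicator

variable {R ι N : Type*} {M : ι → Type*} [CommSemiring R] [∀ i, AddCommMonoid (M i)]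
  [AddCommMonoid N] [∀ i, Module R (M i)] [Module R N]

open scoped Classical in
noncomputable def MultilinearMap.indicator (f : MultilinearMap R M N) (p : (∀ i, M i) → Prop)
    (hp : ∀ (x y : ∀ i, M i) (j : ι), (∀ i, i ≠ j → x i = y i) → (p x ↔ p y)) :
    MultilinearMap R M N where
  toFun x := if p x then f x else 0
  map_update_add' x j a b := by
    have hpx : ∀ v, p (Function.update x j v) ↔ p x := fun v =>
      hp _ _ j fun i hij => Function.update_of_ne hij v x
    by_cases h : p x
    · simp only [hpx, if_pos h, f.map_update_add]
    · simp only [hpx, if_neg h, add_zero]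
  map_update_smul' x j c a := by
    have hpx : ∀ v, p (Function.update x j v) ↔ p x := fun v =>
      hp _ _ j fun i hij => Function.update_of_ne hij v x
    by_cases h : p x
    · simp only [hpx, if_pos h, f.map_update_smul]
    · simp only [hpx, if_neg h, smul_zero]

open scoped Classical in
theorem MultilinearMap.indicator_apply (f : MultilinearMap R M N) (p : (∀ i, M i) → Prop)
    (hp : ∀ (x y : ∀ i, M i) (j : ι), (∀ i, i ≠ j → x i = y i) → (p x ↔ p y)) (x : ∀ i, M i) :
    f.indicator p hp x = if p x then f x else 0 :=
  rfl

end Indicator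

theorem Set.finite_setOf_iff_of_eqOn_compl_singleton {ι : Type*} {M : ι → Type*}
    (q : ∀ i, M i → Prop) (x y : ∀ i, M i) (j : ι) (hxy : ∀ i, i ≠ j → x i = y i) :
    {i | q i (x i)}.Finite ↔ {i | q i (y i)}.Finite := by
  have subset_insert : ∀ z w : ∀ i, M i, (∀ i, i ≠ j → z i = w i) →
      {i | q i (z i)} ⊆ insert j {i | q i (w i)} := by
    intro z w hzw i hi
    by_cases hij : i = j
    · exact Or.inl hij
    · exact Or.inr (by simpa only [Set.mem_ofPred_eq, hzw i hij] using hi)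
  exact ⟨fun h => (h.insert j).subset (subset_insert _ _ fun i hij => (hxy i hij).symm),
    fun h => (h.insert j).subset (subset_insert _ _ hxy)⟩

theorem Submodule.disjoint_ker_eqLocus_id {R M : Type*} [Semiring R] [AddCommMonoid M]
    [Module R M] (P : M →ₗ[R] M) :
    Disjoint (LinearMap.ker P) (LinearMap.eqLocus P LinearMap.id) :=
  Submodule.disjoint_def.2 fun _ hker hfix => (hfix.symm.trans (LinearMap.mem_ker.1 hker))

section TensorSpans

variable {I : Type*} (H : I → Type*) [∀ i, NormedAddCommGroup (H i)]
  [∀ i, InnerProductSpace ℂ (H i)]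

open scoped Classical in
noncomputable def unitPartProj : (⨂[ℂ] i, H i) →ₗ[ℂ] ⨂[ℂ] i, H i :=
  PiTensorProduct.lift <|
    (PiTensorProduct.tprod ℂ).indicator (fun x : ∀ i, H i => {i | ‖x i‖ ≠ 1}.Finite)
    (Set.finite_setOf_iff_of_eqOn_compl_singleton fun i (v : H i) => ‖v‖ ≠ 1)

open scoped Classical in
theorem unitPartProj_tprod (x : ∀ i, H i) :
    unitPartProj H (PiTensorProduct.tprod ℂ x) =
      if {i | ‖x i‖ ≠ 1}.Finite then PiTensorProduct.tprod ℂ x else 0 := by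
  rw [unitPartProj, PiTensorProduct.lift.tprod, MultilinearMap.indicator_apply]

theorem ktilTensorSpan_le_ker_unitPartProj :
    ktilTensorSpan H ≤ LinearMap.ker (unitPartProj H) := by
  rw [ktilTensorSpan, Submodule.span_le]
  rintro _ ⟨x, ⟨-, hinf⟩, rfl⟩
  have hinf' : {i | ‖x i‖ ≠ 1}.Infinite := hinf.mono fun _ hi => hi.ne
  rw [SetLike.mem_coe, LinearMap.mem_ker, unitPartProj_tprod, if_neg hinf']

theorem unTensorSpan_le_eqLocus_unitPartProj :
    unTensorSpan H ≤ LinearMap.eqLocus (unitPartProj H) LinearMap.id := by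
  rw [unTensorSpan, Submodule.span_le]
  rintro _ ⟨x, hx, rfl⟩
  have hfin : {i | ‖x i‖ ≠ 1}.Finite := by simp [hx]
  rw [SetLike.mem_coe, LinearMap.mem_eqLocus, unitPartProj_tprod, if_pos hfin, LinearMap.id_apply]

variable {H}

theorem tprod_mem_unTensorSpan {x : ∀ i, H i} (hfin : {i | ‖x i‖ ≠ 1}.Finite) :
    PiTensorProduct.tprod ℂ x ∈ unTensorSpan H := by
  classical
  by_cases hzero : ∃ i, x i = 0
  · obtain ⟨i, hi⟩ := hzero
    rw [(PiTensorProduct.tprod ℂ).map_coord_zero i hi]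
    exact Submodule.zero_mem _
  push Not at hzero
  set u : ∀ i, H i := fun i => (‖x i‖ : ℂ)⁻¹ • x i
  have hu : ∀ i, ‖u i‖ = 1 := fun i => by
    simp [u, norm_smul, inv_mul_cancel₀ (norm_ne_zero_iff.2 (hzero i))]
  have hx : x = hfin.toFinset.piecewise (fun i => (‖x i‖ : ℂ) • u i) u := by
    funext i
    by_cases hi : ‖x i‖ = 1
    · rw [Finset.piecewise_eq_of_notMem _ _ _ (by simpa using hi)]
      simp [u, hi]
    · rw [Finset.piecewise_eq_of_mem _ _ _ (by simpa using hi), smul_inv_smul₀]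
      exact_mod_cast norm_ne_zero_iff.2 (hzero i)
  rw [hx, (PiTensorProduct.tprod ℂ).map_piecewise_smul]
  exact Submodule.smul_mem _ _ (Submodule.subset_span ⟨u, hu, rfl⟩)

theorem ctTensorSpan_le_sup : ctTensorSpan H ≤ ktilTensorSpan H ⊔ unTensorSpan H := by
  rw [ctTensorSpan, Submodule.span_le]
  rintro _ ⟨x, hx, rfl⟩
  by_cases hinf : {i | ‖x i‖ < 1}.Infinite
  · exact Submodule.mem_sup_left (Submodule.subset_span ⟨x, ⟨hx, hinf⟩, rfl⟩)
  · have hne : {i | ‖x i‖ ≠ 1} = {i | ‖x i‖ < 1} := Set.ext fun i => (hx i).lt_iff_ne.symm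
    rw [Set.not_infinite, ← hne] at hinf
    exact Submodule.mem_sup_right (tprod_mem_unTensorSpan hinf)

theorem ktilTensorSpan_le_ctTensorSpan : ktilTensorSpan H ≤ ctTensorSpan H :=
  Submodule.span_mono <| by rintro _ ⟨x, ⟨hx, -⟩, rfl⟩; exact ⟨x, hx, rfl⟩

theorem unTensorSpan_le_ctTensorSpan : unTensorSpan H ≤ ctTensorSpan H :=
  Submodule.span_mono <| by rintro _ ⟨x, hx, rfl⟩; exact ⟨x, fun i => (hx i).le, rfl⟩

end TensorSpans

theorem ctTensorSpan_directSum_general {I : Type*} (H : I → Type*)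
    [∀ i, NormedAddCommGroup (H i)] [∀ i, InnerProductSpace ℂ (H i)] :
    ktilTensorSpan H ⊔ unTensorSpan H = ctTensorSpan H ∧
      ktilTensorSpan H ⊓ unTensorSpan H = ⊥ :=
  ⟨le_antisymm (sup_le ktilTensorSpan_le_ctTensorSpan unTensorSpan_le_ctTensorSpan)
      ctTensorSpan_le_sup,
    ((Submodule.disjoint_ker_eqLocus_id (unitPartProj H)).mono
      (ktilTensorSpan_le_ker_unitPartProj H) (unTensorSpan_le_eqLocus_unitPartProj H)).eq_bot⟩

/-- `⨂^ct_{i∈I} H_i` is the internal direct sum of `K̃` and `⨂^un_{i∈I} H_i`. -/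
theorem ctTensorSpan_directSum {I : Type*} [Infinite I] (H : I → Type*)
    [∀ i, NormedAddCommGroup (H i)] [∀ i, InnerProductSpace ℂ (H i)] :
    ktilTensorSpan H ⊔ unTensorSpan H = ctTensorSpan H ∧
      ktilTensorSpan H ⊓ unTensorSpan H = ⊥ :=
  ctTensorSpan_directSum_general H
end
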